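/- The γ-relation of the λ^p-calculus is Church-Rosser: for λ^p-terms M, R, S, if M ↠_γ R and M ↠_γ S, then there exists a λ^p-term T such that R ↠_γ T and S ↠_γ T. -/

import Mathlib

/-- λ^p-terms: M ::= x | M₁ M₂ | λx.M | (M₁, M₂) over a countably infinite
set of variables. -/
inductive PTerm : Type
  | var : ℕ → PTerm
  | app : PTerm → PTerm → PTerm
  | lam : ℕ → PTerm → PTerm
  | coll : PTerm → PTerm → PTerm

/-- The congruence on λ^p-terms generated by (ClnOrd) M,N ≡ N,M and
(ClnNest) (M,N),P ≡ M,(N,P): the smallest equivalence relation compatible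
with all term constructors containing the two axioms. -/
inductive Cong : PTerm → PTerm → Prop
  | refl (M : PTerm) : Cong M M
  | symm {M N : PTerm} : Cong M N → Cong N M
  | trans {M N P : PTerm} : Cong M N → Cong N P → Cong M P
  | app {M M' N N' : PTerm} : Cong M M' → Cong N N' → Cong (.app M N) (.app M' N')
  | lam (x : ℕ) {M M' : PTerm} : Cong M M' → Cong (.lam x M) (.lam x M')
  | coll {M M' N N' : PTerm} : Cong M M' → Cong N N' → Cong (.coll M N) (.coll M' N')
  | ord (M N : PTerm) : Cong (.coll M N) (.coll N M)
  | nest (M N P : PTerm) : Cong (.coll (.coll M N) P) (.coll M (.coll N P))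

/-- `collOf M [N₁,…,Nₖ]` is the right-associated collection `(M, N₁, …, Nₖ)`. -/
def collOf : PTerm → List PTerm → PTerm
  | M, [] => M
  | M, N :: L => .coll M (collOf N L)

/-- A term is a collection if its outermost constructor is the comma. -/
def IsColl : PTerm → Prop
  | .coll _ _ => True
  | _ => False

/-- The γ-relation of the λ^p-calculus: it relates each application P Q, where
P is congruent to a collection (M₀,…,M_m) and Q to a collection (N₀,…,N_n)
with at least one of them a proper (more-than-one-element) collection, to the
collection of all applications M_i N_j. -/
inductive Gamma : PTerm → PTerm → Prop
  | mk (P Q M N : PTerm) (Ms Ns : List PTerm)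
      (hP : Cong P (collOf M Ms)) (hQ : Cong Q (collOf N Ns))
      (hn : Ms ≠ [] ∨ Ns ≠ []) :
      Gamma (.app P Q)
        (collOf (.app M N)
          (Ns.map (.app M) ++ Ms.flatMap fun Mi => (N :: Ns).map (.app Mi)))

/-- One-step γ-reduction: the compatible closure (closure under all term
constructors) of the γ-relation. -/
inductive StepG : PTerm → PTerm → Prop
  | gamma {M N : PTerm} : Gamma M N → StepG M N
  | appL {M M' N : PTerm} : StepG M M' → StepG (.app M N) (.app M' N)
  | appR {M N N' : PTerm} : StepG N N' → StepG (.app M N) (.app M N')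
  | lam (x : ℕ) {M M' : PTerm} : StepG M M' → StepG (.lam x M) (.lam x M')
  | collL {M M' N : PTerm} : StepG M M' → StepG (.coll M N) (.coll M' N)
  | collR {M N N' : PTerm} : StepG N N' → StepG (.coll M N) (.coll M N')

/-- γ-reduction ↠_γ : the reflexive-transitive closure of one-step
γ-reduction, on terms considered up to the congruence generated by
(ClnOrd) and (ClnNest). -/
def RedG : PTerm → PTerm → Prop :=
  Relation.ReflTransGen (fun M N => StepG M N ∨ Cong M N)

/-!
Every term reduces to a γ-normal form that is determined by a multiset of components: a
collection contributes the sum of the multisets of its parts, an application `M N` the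
multiset of all applications `A B` of a component `A` of `M` to a component `B` of `N`.
Since (ClnOrd) and (ClnNest) make the comma associative and commutative, any two
collections with the same multiset of parts are congruent, so the normal form may be read
off the multiset in an arbitrary order. The multiset is invariant under congruence (by
commutativity and associativity of `+`) and under γ-steps (by distributivity of the product
over sums), hence under `↠_γ`; so `R` and `S` both reduce to the normal form of `M`.
-/

namespace PTerm

-- `ofList []` is a junk value; `ofList` is only applied to nonempty lists.
def ofList : List PTerm → PTerm
  | [] => .var 0
  | M :: L => collOf M L

noncomputable def ofMultiset (s : Multiset PTerm) : PTerm :=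
  ofList s.toList

noncomputable def nfAtoms : PTerm → Multiset PTerm
  | .var n => {.var n}
  | .app M N => (nfAtoms M).bind fun A => (nfAtoms N).map (.app A)
  | .lam x M => {.lam x (ofMultiset (nfAtoms M))}
  | .coll M N => nfAtoms M + nfAtoms N

noncomputable def nf (M : PTerm) : PTerm :=
  ofMultiset (nfAtoms M)

theorem ofList_cons_cons (M N : PTerm) (L : List PTerm) :
    ofList (M :: N :: L) = .coll M (ofList (N :: L)) :=
  rfl

theorem cong_ofList_of_perm {L L' : List PTerm} (h : L.Perm L') :
    Cong (ofList L) (ofList L') := by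
  induction h with
  | nil => exact .refl _
  | @cons M L L' hperm ih =>
    match L, L', hperm with
    | [], _, hperm => rw [hperm.symm.eq_nil]; exact .refl _
    | _ :: _, [], hperm => exact absurd hperm.eq_nil (List.cons_ne_nil _ _)
    | _ :: _, _ :: _, _ => exact .coll (.refl M) ih
  | swap M N L =>
    match L with
    | [] => exact .ord N M
    | _ :: _ =>
      exact (Cong.nest N M _).symm.trans ((Cong.coll (.ord N M) (.refl _)).trans (.nest M N _))
  | trans _ _ ih₁ ih₂ => exact ih₁.trans ih₂

theorem cong_coll_ofList_append {L L' : List PTerm} (hL : L ≠ []) (hL' : L' ≠ []) :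
    Cong (.coll (ofList L) (ofList L')) (ofList (L ++ L')) := by
  induction L with
  | nil => exact absurd rfl hL
  | cons M L ih =>
    obtain ⟨N, L', rfl⟩ := List.exists_cons_of_ne_nil hL'
    cases L with
    | nil => exact .refl _
    | cons P L =>
      rw [ofList_cons_cons]
      exact (Cong.nest _ _ _).trans (.coll (.refl M) (ih (List.cons_ne_nil _ _)))

theorem cong_ofList_ofMultiset (L : List PTerm) : Cong (ofList L) (ofMultiset L) :=
  cong_ofList_of_perm (Multiset.coe_eq_coe.mp (Multiset.coe_toList (L : Multiset PTerm))).symm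

theorem cong_coll_ofMultiset {s t : Multiset PTerm} (hs : s ≠ 0) (ht : t ≠ 0) :
    Cong (.coll (ofMultiset s) (ofMultiset t)) (ofMultiset (s + t)) := by
  have key := (cong_coll_ofList_append (Multiset.toList_eq_nil.not.mpr hs)
    (Multiset.toList_eq_nil.not.mpr ht)).trans (cong_ofList_ofMultiset (s.toList ++ t.toList))
  rwa [← Multiset.coe_add, Multiset.coe_toList, Multiset.coe_toList] at key

theorem nfAtoms_ne_zero (M : PTerm) : nfAtoms M ≠ 0 := by
  induction M with
  | var n => simp [nfAtoms]
  | app M N ihM ihN =>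
    obtain ⟨A, hA⟩ := Multiset.exists_mem_of_ne_zero ihM
    obtain ⟨B, hB⟩ := Multiset.exists_mem_of_ne_zero ihN
    exact fun h => Multiset.eq_zero_iff_forall_notMem.mp h _
      (Multiset.mem_bind.mpr ⟨A, hA, Multiset.mem_map_of_mem _ hB⟩)
  | lam x M _ => simp [nfAtoms]
  | coll M N ihM _ => simp [nfAtoms, ihM]

theorem nfAtoms_collOf (M : PTerm) (L : List PTerm) :
    nfAtoms (collOf M L) = (M :: L : Multiset PTerm).bind nfAtoms := by
  induction L generalizing M with
  | nil => simp [collOf]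
  | cons N L ih => rw [collOf, nfAtoms, ih, ← Multiset.cons_coe (a := M), Multiset.cons_bind]

theorem nfAtoms_eq_of_cong {M N : PTerm} (h : Cong M N) : nfAtoms M = nfAtoms N := by
  induction h with
  | refl => rfl
  | symm _ ih => exact ih.symm
  | trans _ _ ih₁ ih₂ => exact ih₁.trans ih₂
  | app _ _ ih₁ ih₂ => rw [nfAtoms, nfAtoms, ih₁, ih₂]
  | lam x _ ih => rw [nfAtoms, nfAtoms, ih]
  | coll _ _ ih₁ ih₂ => rw [nfAtoms, nfAtoms, ih₁, ih₂]
  | ord M N => exact add_comm _ _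
  | nest M N P => exact add_assoc _ _ _

theorem nfAtoms_eq_of_gamma {M N : PTerm} (h : Gamma M N) : nfAtoms M = nfAtoms N := by
  obtain ⟨P, Q, M, N, Ms, Ns, hP, hQ, -⟩ := h
  have hcontractum : app M N :: (Ns.map (app M) ++ Ms.flatMap fun Mi => (N :: Ns).map (app Mi)) =
      (M :: Ms).flatMap fun Mi => (N :: Ns).map (app Mi) :=
    rfl
  rw [nfAtoms, nfAtoms_eq_of_cong hP, nfAtoms_eq_of_cong hQ, nfAtoms_collOf, nfAtoms_collOf,
    nfAtoms_collOf, hcontractum, ← Multiset.coe_bind, Multiset.bind_assoc, Multiset.bind_assoc]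
  refine Multiset.bind_congr fun Mi _ => ?_
  rw [← Multiset.map_coe, Multiset.bind_map]
  simp only [Multiset.map_bind, nfAtoms]
  exact Multiset.bind_bind _ _

theorem nfAtoms_eq_of_stepG {M N : PTerm} (h : StepG M N) : nfAtoms M = nfAtoms N := by
  induction h with
  | gamma h => exact nfAtoms_eq_of_gamma h
  | appL _ ih | appR _ ih | lam _ _ ih | collL _ ih | collR _ ih => rw [nfAtoms, nfAtoms, ih]

theorem nfAtoms_eq_of_redG {M N : PTerm} (h : RedG M N) : nfAtoms M = nfAtoms N := by
  induction h with
  | refl => rfl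
  | tail _ hstep ih => exact ih.trans (hstep.elim nfAtoms_eq_of_stepG nfAtoms_eq_of_cong)

theorem nf_eq_of_redG {M N : PTerm} (h : RedG M N) : nf M = nf N :=
  congrArg ofMultiset (nfAtoms_eq_of_redG h)

theorem redG_of_cong {M N : PTerm} (h : Cong M N) : RedG M N :=
  .single (.inr h)

theorem redG_map {f : PTerm → PTerm} (hstep : ∀ {M N}, StepG M N → StepG (f M) (f N))
    (hcong : ∀ {M N}, Cong M N → Cong (f M) (f N)) {M N : PTerm} (h : RedG M N) :
    RedG (f M) (f N) :=
  Relation.ReflTransGen.lift f (fun _ _ => Or.imp hstep hcong) _ _ h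

theorem redG_app {M M' N N' : PTerm} (hM : RedG M M') (hN : RedG N N') :
    RedG (.app M N) (.app M' N') :=
  (redG_map (f := (.app · N)) .appL (.app · (.refl N)) hM).trans
    (redG_map (f := .app M') .appR (.app (.refl M')) hN)

theorem redG_lam (x : ℕ) {M M' : PTerm} (h : RedG M M') : RedG (.lam x M) (.lam x M') :=
  redG_map (.lam x) (.lam x) h

theorem redG_coll {M M' N N' : PTerm} (hM : RedG M M') (hN : RedG N N') :
    RedG (.coll M N) (.coll M' N') :=
  (redG_map (f := (.coll · N)) .collL (.coll · (.refl N)) hM).trans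
    (redG_map (f := .coll M') .collR (.coll (.refl M')) hN)

theorem redG_app_ofList {L L' : List PTerm} (hL : L ≠ []) (hL' : L' ≠ []) :
    RedG (.app (ofList L) (ofList L')) (ofList (L.flatMap fun A => L'.map (.app A))) := by
  obtain ⟨M, Ms, rfl⟩ := List.exists_cons_of_ne_nil hL
  obtain ⟨N, Ns, rfl⟩ := List.exists_cons_of_ne_nil hL'
  by_cases hn : Ms ≠ [] ∨ Ns ≠ []
  · exact .single (.inl (.gamma (.mk _ _ M N Ms Ns (.refl _) (.refl _) hn)))
  · obtain ⟨rfl, rfl⟩ : Ms = [] ∧ Ns = [] := by simpa using hn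
    exact .refl

theorem redG_nf (M : PTerm) : RedG M (nf M) := by
  induction M with
  | var n =>
    rw [nf, nfAtoms, ofMultiset, Multiset.toList_singleton]
    exact .refl
  | lam x M ih =>
    rw [nf, nfAtoms, ofMultiset, Multiset.toList_singleton]
    exact redG_lam x ih
  | coll M N ihM ihN =>
    exact (redG_coll ihM ihN).trans
      (redG_of_cong (cong_coll_ofMultiset (nfAtoms_ne_zero M) (nfAtoms_ne_zero N)))
  | app M N ihM ihN =>
    have hatoms : ((nfAtoms M).toList.flatMap fun A => (nfAtoms N).toList.map (app A) :
        Multiset PTerm) = nfAtoms (.app M N) := by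
      rw [← Multiset.coe_bind]
      simp only [← Multiset.map_coe, Multiset.coe_toList, nfAtoms]
    have hred := (redG_app ihM ihN).trans (redG_app_ofList
      (Multiset.toList_eq_nil.not.mpr (nfAtoms_ne_zero M))
      (Multiset.toList_eq_nil.not.mpr (nfAtoms_ne_zero N)))
    refine hred.trans (redG_of_cong ?_)
    rw [nf, ← hatoms]
    exact cong_ofList_ofMultiset _

end PTerm

/-- The γ-relation of the λ^p-calculus is Church-Rosser: if M ↠_γ R and
M ↠_γ S then there exists a λ^p-term T with R ↠_γ T and S ↠_γ T. -/
theorem gamma_church_rosser (M R S : PTerm) (hR : RedG M R) (hS : RedG M S) :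
    ∃ T : PTerm, RedG R T ∧ RedG S T := by
  exact ⟨M.nf, PTerm.nf_eq_of_redG hR ▸ R.redG_nf, PTerm.nf_eq_of_redG hS ▸ S.redG_nf⟩
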